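/- arXiv:0712.0179 — 3 statements merged into one kernel-verified Lean document; each statement's English description precedes it below -/
import Mathlib

section
/- If the two series ∑_{n=1}^∞ (∑_{k≥n} a_k)² and ∑_{n=1}^∞ (∑_{k≤−n} a_k)² converge, then the sequence A_n = ∑_{j∈ℤ} (∑_{k=1}^n b_{k−j})² is bounded, where b_0 = a_0 − A, b_j = a_j for j ≠ 0, and A = ∑_{i∈ℤ} a_i. -/
theorem heyde_condition_implies_An_bounded
    (a : ℤ → ℝ) (A : ℝ)
    (hl2 : Summable fun i : ℤ => (a i) ^ 2)
    (hA : HasSum a A)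
    (hheyde1 : Summable fun n : ℕ => (∑' k : ℕ, a ((n : ℤ) + 1 + k)) ^ 2)
    (hheyde2 : Summable fun n : ℕ => (∑' k : ℕ, a (-(n : ℤ) - 1 - k)) ^ 2)
    (b : ℤ → ℝ) (hb0 : b 0 = a 0 - A) (hb : ∀ j : ℤ, j ≠ 0 → b j = a j) :
    ∃ C : ℝ, ∀ n : ℕ, 0 < n →
      ∑' j : ℤ, (∑ k ∈ Finset.Icc (1 : ℤ) n, b (k - j)) ^ 2 ≤ C := by
  classical
  have ha : Summable a := hA.summable
  -- summability of half-line tails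
  have hP : ∀ c : ℤ, Summable (fun k : ℕ => a (c + k)) := by
    intro c
    exact ha.comp_injective (fun x y h => by simpa using h)
  have hM : ∀ c : ℤ, Summable (fun k : ℕ => a (c - k)) := by
    intro c
    exact ha.comp_injective (fun x y h => by omega)
  -- index congruence helpers
  have congP : ∀ c d : ℤ, c = d →
      (∑' k : ℕ, a (c + k)) = ∑' k : ℕ, a (d + k) := fun c d h => by rw [h]
  have congM : ∀ c d : ℤ, c = d →
      (∑' k : ℕ, a (c - k)) = ∑' k : ℕ, a (d - k) := fun c d h => by rw [h]
  -- splitting of the total sum at any point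
  have hsplit : ∀ c : ℤ, (∑' k : ℕ, a (c + k)) + (∑' k : ℕ, a (c - 1 - k)) = A := by
    intro c
    have h1 : HasSum (fun m : ℤ => a (c + m)) A := (Equiv.addLeft c).hasSum_iff.mpr hA
    have h2 : HasSum (fun k : ℕ => a (c + k)) (∑' k : ℕ, a (c + k)) := (hP c).hasSum
    have h3' : HasSum (fun k : ℕ => a (c - 1 - k)) (∑' k : ℕ, a (c - 1 - k)) :=
      (hM (c - 1)).hasSum
    have heq : (fun k : ℕ => a (c + -((k : ℤ) + 1))) = fun k : ℕ => a (c - 1 - k) :=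
      funext fun k => by congr 1; ring
    have h3 : HasSum (fun k : ℕ => a (c + -((k : ℤ) + 1))) (∑' k : ℕ, a (c - 1 - k)) := by
      rw [heq]; exact h3'
    have h4 := HasSum.of_nat_of_neg_add_one (f := fun m : ℤ => a (c + m)) h2 h3
    exact h4.unique h1
  -- the finite interval sum in terms of tails
  have hIcc : ∀ p q : ℤ, p ≤ q →
      ∑ m ∈ Finset.Icc p q, a m = (∑' k : ℕ, a (p + k)) - (∑' k : ℕ, a (q + 1 + k)) := by
    intro p q hpq
    set N := (q + 1 - p).toNat with hNdef
    have hN : (N : ℤ) = q + 1 - p := Int.toNat_of_nonneg (by omega)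
    have h1 := Summable.sum_add_tsum_nat_add (f := fun k : ℕ => a (p + k)) N (hP p)
    have h3 : ∑ i ∈ Finset.range N, a (p + i) = ∑ m ∈ Finset.Icc p q, a m := by
      apply Finset.sum_nbij' (i := fun i : ℕ => p + (i : ℤ)) (j := fun m : ℤ => (m - p).toNat)
      · intro i hi
        simp only [Finset.mem_range] at hi
        simp only [Finset.mem_Icc]
        omega
      · intro m hm
        simp only [Finset.mem_Icc] at hm
        simp only [Finset.mem_range]
        omega
      · intro i hi; omega
      · intro m hm
        simp only [Finset.mem_Icc] at hm
        have : ((m - p).toNat : ℤ) = m - p := Int.toNat_of_nonneg (by omega)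
        omega
      · intro i hi; rfl
    have h2' : ∑' i : ℕ, a (p + ((i + N : ℕ) : ℤ)) = ∑' k : ℕ, a (q + 1 + k) :=
      tsum_congr fun i => by
        rw [show p + ((i + N : ℕ) : ℤ) = q + 1 + (i : ℤ) from by push_cast; omega]
    rw [← h3]
    have := h1
    rw [h2'] at this
    -- this : ∑ range + ∑' tail = ∑' k, a (p + k)
    linarith [this]
  -- the function Φ
  set Φ : ℤ → ℝ := fun m =>
    if 0 ≤ m then (∑' k : ℕ, a (m + 1 + k)) else -(∑' k : ℕ, a (m - k)) with hΦdef
  have hPhi : ∀ m : ℤ, Φ m = (∑' k : ℕ, a (m + 1 + k)) - (if 0 ≤ m then 0 else A) := by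
    intro m
    by_cases h : 0 ≤ m
    · simp [hΦdef, h]
    · have hs := hsplit (m + 1)
      rw [congM (m + 1 - 1) m (by ring)] at hs
      simp only [hΦdef, if_neg h]
      linarith
  -- Φ² is summable with sum C1 + C2
  set C1 : ℝ := ∑' n : ℕ, (∑' k : ℕ, a ((n : ℤ) + 1 + k)) ^ 2 with hC1
  set C2 : ℝ := ∑' n : ℕ, (∑' k : ℕ, a (-(n : ℤ) - 1 - k)) ^ 2 with hC2
  have hΦsum : HasSum (fun m : ℤ => Φ m ^ 2) (C1 + C2) := by
    apply HasSum.of_nat_of_neg_add_one (f := fun m : ℤ => Φ m ^ 2)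
    · have e1 : (fun n : ℕ => Φ (n : ℤ) ^ 2)
          = fun n : ℕ => (∑' k : ℕ, a ((n : ℤ) + 1 + k)) ^ 2 := by
        funext n
        simp only [hΦdef, if_pos (Int.natCast_nonneg n)]
      rw [e1]
      exact hheyde1.hasSum
    · have e2 : (fun n : ℕ => Φ (-((n : ℤ) + 1)) ^ 2)
          = fun n : ℕ => (∑' k : ℕ, a (-(n : ℤ) - 1 - k)) ^ 2 := by
        funext n
        simp only [hΦdef, if_neg (by omega : ¬ (0:ℤ) ≤ -((n:ℤ)+1)), neg_sq]
        rw [congM (-((n : ℤ) + 1)) (-(n : ℤ) - 1) (by ring)]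
      rw [e2]
      exact hheyde2.hasSum
  refine ⟨4 * (C1 + C2), ?_⟩
  intro n hn
  -- the key identity for the inner sum
  have key : ∀ j : ℤ, (∑ k ∈ Finset.Icc (1 : ℤ) (n : ℤ), b (k - j))
      = Φ (-j) - Φ ((n : ℤ) - j) := by
    intro j
    have hre : ∑ m ∈ Finset.Icc (1 - j) ((n : ℤ) - j), b m
        = ∑ k ∈ Finset.Icc (1 : ℤ) (n : ℤ), b (k - j) := by
      apply Finset.sum_nbij' (i := fun m : ℤ => m + j) (j := fun k : ℤ => k - j)
      · intro m hm
        simp only [Finset.mem_Icc] at hm ⊢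
        omega
      · intro k hk
        simp only [Finset.mem_Icc] at hk ⊢
        omega
      · intro m _; ring
      · intro k _; ring
      · intro m _; congr 1; ring
    have hbm : ∀ m : ℤ, b m = a m - (if m = 0 then A else 0) := by
      intro m
      by_cases hm : m = 0
      · simp [hm, hb0]
      · simp [hm, hb m hm]
    have hsum_b : ∑ m ∈ Finset.Icc (1 - j) ((n : ℤ) - j), b m
        = (∑ m ∈ Finset.Icc (1 - j) ((n : ℤ) - j), a m)
          - (if (0 : ℤ) ∈ Finset.Icc (1 - j) ((n : ℤ) - j) then A else 0) := by
      rw [← Finset.sum_ite_eq' (Finset.Icc (1 - j) ((n : ℤ) - j)) (0 : ℤ) (fun _ => A),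
        ← Finset.sum_sub_distrib]
      exact Finset.sum_congr rfl fun m _ => hbm m
    have hle : (1 : ℤ) - j ≤ (n : ℤ) - j := by omega
    have hIv := hIcc (1 - j) ((n : ℤ) - j) hle
    rw [← hre, hsum_b, hIv, hPhi (-j), hPhi ((n : ℤ) - j),
      congP (1 - j) (-j + 1) (by ring)]
    simp only [Finset.mem_Icc]
    split_ifs
    any_goals (exfalso; omega)
    all_goals ring
  -- summability of the comparison functions
  have s1 : Summable (fun j : ℤ => Φ (-j) ^ 2) :=
    hΦsum.summable.comp_injective neg_injective
  have s2 : Summable (fun j : ℤ => Φ ((n : ℤ) - j) ^ 2) :=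
    hΦsum.summable.comp_injective (fun x y h => by omega)
  have hbound : ∀ j : ℤ, (Φ (-j) - Φ ((n : ℤ) - j)) ^ 2
      ≤ 2 * Φ (-j) ^ 2 + 2 * Φ ((n : ℤ) - j) ^ 2 := by
    intro j
    nlinarith [sq_nonneg (Φ (-j) + Φ ((n : ℤ) - j))]
  have hsumbound : Summable (fun j : ℤ => 2 * Φ (-j) ^ 2 + 2 * Φ ((n : ℤ) - j) ^ 2) :=
    (s1.mul_left 2).add (s2.mul_left 2)
  have hsumf : Summable (fun j : ℤ => (Φ (-j) - Φ ((n : ℤ) - j)) ^ 2) :=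
    Summable.of_nonneg_of_le (fun j => sq_nonneg _) hbound hsumbound
  have t1 : ∑' j : ℤ, Φ (-j) ^ 2 = C1 + C2 := by
    have := (Equiv.neg ℤ).tsum_eq (fun m : ℤ => Φ m ^ 2)
    simp only [Equiv.neg_apply] at this
    rw [this, hΦsum.tsum_eq]
  have t2 : ∑' j : ℤ, Φ ((n : ℤ) - j) ^ 2 = C1 + C2 := by
    have := (Equiv.subLeft (n : ℤ)).tsum_eq (fun m : ℤ => Φ m ^ 2)
    simp only [Equiv.subLeft_apply] at this
    rw [this, hΦsum.tsum_eq]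
  calc ∑' j : ℤ, (∑ k ∈ Finset.Icc (1 : ℤ) (n : ℤ), b (k - j)) ^ 2
      = ∑' j : ℤ, (Φ (-j) - Φ ((n : ℤ) - j)) ^ 2 := tsum_congr fun j => by rw [key j]
    _ ≤ ∑' j : ℤ, (2 * Φ (-j) ^ 2 + 2 * Φ ((n : ℤ) - j) ^ 2) :=
        Summable.tsum_le_tsum hbound hsumf hsumbound
    _ = 2 * (C1 + C2) + 2 * (C1 + C2) := by
        rw [Summable.tsum_add (s1.mul_left 2) (s2.mul_left 2), tsum_mul_left, tsum_mul_left, t1, t2]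
    _ ≤ 4 * (C1 + C2) := by linarith
end

section
/- Let X = (X_1, ..., X_k) be an ℝ^k-valued random variable. For each i define φ^(i) = sup over (x_1,...,x_k) ∈ ℝ^k of the essential supremum of |E(∏_{j≠i}(1_{X_j>x_j} − P(X_j>x_j)) | σ(X_i)) − E(∏_{j≠i}(1_{X_j>x_j} − P(X_j>x_j)))|. Then for any (x_1,...,x_k), |E(∏_{i=1}^k (1_{X_i>x_i} − P(X_i>x_i)))| ≤ φ^(i) · min(P(X_i ≤ x_i), P(X_i > x_i)). -/
/-!
Write `ξ_j = 1_{X_j > x_j} - P(X_j > x_j)`, `A = {X_i > x_i}` and `g = ∏_{j ≠ i} ξ_j`, so that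
`∏_j ξ_j = (1_A - P(A)) g`. Since `A ∈ σ(X_i)`, the tower property gives
`E[(1_A - P(A)) g] = ∫_A h` with `h = E[g | σ(X_i)] - E g`. As `h` has mean zero, this is also
`-∫_{Aᶜ} h`, and `|h| ≤ φ^(i)` bounds both integrals by `φ^(i) P(A)` and `φ^(i) P(Aᶜ)`.
-/

open MeasureTheory

namespace MeasureTheory

variable {Ω : Type*} {m m0 : MeasurableSpace Ω} {μ : Measure Ω}

theorem integral_indicator_sub_mul_eq_setIntegral_condExp_sub [IsFiniteMeasure μ]
    (hm : m ≤ m0) {A : Set Ω} (hA : MeasurableSet[m] A) {g : Ω → ℝ} (hg : Integrable g μ) :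
    ∫ ω, (A.indicator 1 ω - μ.real A) * g ω ∂μ = ∫ ω in A, (μ[g | m] ω - ∫ ω', g ω' ∂μ) ∂μ := by
  have hA0 : MeasurableSet A := hm A hA
  have hsplit : (fun ω => (A.indicator 1 ω - μ.real A) * g ω)
      = fun ω => A.indicator g ω - μ.real A * g ω := by
    ext ω
    by_cases hω : ω ∈ A <;> simp [hω, sub_mul]
  rw [hsplit, integral_sub (hg.indicator hA0) (hg.const_mul _), integral_indicator hA0,
    integral_const_mul, integral_sub integrable_condExp.integrableOn (integrable_const _),
    setIntegral_condExp hm hg hA, setIntegral_const, smul_eq_mul, mul_comm]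

theorem abs_setIntegral_le_mul_min_of_integral_eq_zero [IsFiniteMeasure μ] {h : Ω → ℝ} {C : ℝ}
    (hC : 0 ≤ C) (hh : Integrable h μ) (h_mean : ∫ ω, h ω ∂μ = 0)
    (h_bound : ∀ᵐ ω ∂μ, |h ω| ≤ C) {A : Set Ω} (hA : MeasurableSet A) :
    |∫ ω in A, h ω ∂μ| ≤ C * min (μ.real Aᶜ) (μ.real A) := by
  have hset : ∀ s : Set Ω, |∫ ω in s, h ω ∂μ| ≤ C * μ.real s := fun s =>
    norm_setIntegral_le_of_norm_le_const_ae (measure_lt_top μ s)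
      (ae_restrict_of_ae (h_bound.mono fun ω hω => (Real.norm_eq_abs _).trans_le hω))
  have hcompl : ∫ ω in A, h ω ∂μ = -∫ ω in Aᶜ, h ω ∂μ := by
    linarith [integral_add_compl hA hh]
  rw [mul_min_of_nonneg _ _ hC]
  exact le_min (by rw [hcompl, abs_neg]; exact hset Aᶜ) (hset A)

theorem abs_integral_indicator_sub_mul_le [IsProbabilityMeasure μ] (hm : m ≤ m0) {A : Set Ω}
    (hA : MeasurableSet[m] A) {g : Ω → ℝ} (hg : Integrable g μ) {C : ℝ}
    (hC : ∀ᵐ ω ∂μ, |μ[g | m] ω - ∫ ω', g ω' ∂μ| ≤ C) :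
    |∫ ω, (A.indicator 1 ω - μ.real A) * g ω ∂μ| ≤ C * min (μ.real Aᶜ) (μ.real A) := by
  obtain ⟨ω, hω⟩ := hC.exists
  have h_mean : ∫ ω, (μ[g | m] ω - ∫ ω', g ω' ∂μ) ∂μ = 0 := by
    rw [integral_sub integrable_condExp (integrable_const _), integral_condExp hm,
      integral_const, probReal_univ, one_smul, sub_self]
  rw [integral_indicator_sub_mul_eq_setIntegral_condExp_sub hm hA hg]
  exact abs_setIntegral_le_mul_min_of_integral_eq_zero ((abs_nonneg _).trans hω)
    (integrable_condExp.sub (integrable_const _)) h_mean hC (hm A hA)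

theorem integrable_prod_indicator_sub_measureReal [IsProbabilityMeasure μ] {ι : Type*}
    (s : Finset ι) {A : ι → Set Ω} (hA : ∀ j, MeasurableSet (A j)) :
    Integrable (fun ω => ∏ j ∈ s, ((A j).indicator 1 ω - μ.real (A j))) μ := by
  refine Integrable.of_bound (Finset.aestronglyMeasurable_fun_prod s fun j _ =>
    ((measurable_const.indicator (hA j)).sub measurable_const).aestronglyMeasurable) 1
    (ae_of_all _ fun ω => ?_)
  rw [Real.norm_eq_abs, Finset.abs_prod]
  exact Finset.prod_le_one (fun _ _ => abs_nonneg _) fun j _ => abs_sub_le_of_nonneg_of_le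
    (Set.indicator_nonneg (fun _ _ => zero_le_one) ω)
    (Set.indicator_apply_le' (fun _ => le_rfl) fun _ => zero_le_one)
    measureReal_nonneg measureReal_le_one

end MeasureTheory

theorem indicator_product_mixing_bound
    {Ω : Type*} [m0 : MeasurableSpace Ω] (μ : Measure Ω) [IsProbabilityMeasure μ]
    (k : ℕ) (X : Fin k → Ω → ℝ)
    (hmeas : ∀ i, Measurable (X i))
    (φ : Fin k → ℝ)
    (hφ : ∀ i : Fin k, ∀ x : Fin k → ℝ,
      ∀ᵐ ω ∂μ,
        |(μ[(fun ω' => ∏ j ∈ Finset.univ.erase i,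
              ((if x j < X j ω' then (1 : ℝ) else 0) - (μ {ω'' | x j < X j ω''}).toReal)) |
            MeasurableSpace.comap (X i) inferInstance]) ω
          - ∫ ω', ∏ j ∈ Finset.univ.erase i,
              ((if x j < X j ω' then (1 : ℝ) else 0) - (μ {ω'' | x j < X j ω''}).toReal) ∂μ|
          ≤ φ i) :
    ∀ (x : Fin k → ℝ) (i : Fin k),
      |∫ ω, ∏ j, ((if x j < X j ω then (1 : ℝ) else 0) - (μ {ω' | x j < X j ω'}).toReal) ∂μ|
        ≤ φ i * min (μ {ω | X i ω ≤ x i}).toReal (μ {ω | x i < X i ω}).toReal := by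
  intro x i
  set A : Fin k → Set Ω := fun j => {ω | x j < X j ω}
  have hA : ∀ j, MeasurableSet (A j) := fun j => hmeas j measurableSet_Ioi
  have hAi : MeasurableSet[MeasurableSpace.comap (X i) inferInstance] (A i) :=
    ⟨Set.Ioi (x i), measurableSet_Ioi, rfl⟩
  have hif_eq_indicator : ∀ j ω, (if x j < X j ω then (1 : ℝ) else 0) = (A j).indicator 1 ω :=
    fun j ω => by simp [A, Set.indicator_apply]
  have hAc : {ω | X i ω ≤ x i} = (A i)ᶜ := by ext ω; simp [A]
  simp_rw [hif_eq_indicator] at hφ ⊢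
  simp_rw [← Finset.mul_prod_erase Finset.univ _ (Finset.mem_univ i)]
  rw [hAc]
  exact abs_integral_indicator_sub_mul_le (hmeas i).comap_le hAi
    (integrable_prod_indicator_sub_measureReal _ hA) (hφ i x)
end

section
/- Let r ∈ (1,2] and let S, R be real random variables on a common probability space with S ∈ L^r, R ∈ L^r, and E(R) = 0. Then ζ_r(law(S+R), law(S)) ≤ ‖R‖_r · ‖S‖_r^{r−1} + ‖R‖_r^r, where ζ_r(μ,ν) = sup{∫f dμ − ∫f dν : f differentiable, |f'(x)−f'(y)| ≤ |x−y|^{r−1}}. -/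
open MeasureTheory
open scoped ENNReal

/-!
Write `f (S + R) - f S = R f'(S) + ρ`. Since `f'` is `(r-1)`-Hölder, the mean value theorem
bounds the Taylor remainder by `|ρ| ≤ |R|^r`, whose expectation is `‖R‖_r^r`. As `E R = 0`,
`E (R f'(S)) = E (R (f'(S) - f'(0)))`, and `|f'(S) - f'(0)| ≤ |S|^(r-1)` together with Hölder's
inequality for the exponents `r` and `r/(r-1)` bounds this by `‖R‖_r ‖S‖_r^(r-1)`.
-/

theorem abs_sub_sub_mul_deriv_le_rpow {f : ℝ → ℝ} {r : ℝ} (hr : 1 ≤ r)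
    (hf : Differentiable ℝ f)
    (hf' : ∀ x y, |deriv f x - deriv f y| ≤ |x - y| ^ (r - 1)) (a b : ℝ) :
    |f (a + b) - f a - b * deriv f a| ≤ |b| ^ r := by
  have hφ : ∀ x, HasDerivAt (fun x => f x - x * deriv f a) (deriv f x - deriv f a) x := fun x =>
    (hf x).hasDerivAt.fun_sub (hasDerivAt_mul_const (deriv f a))
  have hbound : ∀ x ∈ Set.uIcc a (a + b), ‖deriv f x - deriv f a‖ ≤ |b| ^ (r - 1) :=
    fun x hx => (hf' x a).trans <| Real.rpow_le_rpow (abs_nonneg _)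
      (by simpa using Set.abs_sub_left_of_mem_uIcc hx) (by linarith)
  have hmvt := (convex_uIcc a (a + b)).norm_image_sub_le_of_norm_hasDerivWithin_le
    (fun x _ => (hφ x).hasDerivWithinAt) hbound Set.left_mem_uIcc Set.right_mem_uIcc
  calc |f (a + b) - f a - b * deriv f a|
      = ‖(f (a + b) - (a + b) * deriv f a) - (f a - a * deriv f a)‖ := by
        rw [Real.norm_eq_abs]; ring_nf
    _ ≤ |b| ^ (r - 1) * ‖a + b - a‖ := hmvt
    _ = |b| ^ r := by
        rw [add_sub_cancel_left, Real.norm_eq_abs,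
          ← Real.rpow_add_one' (abs_nonneg b) (by linarith), sub_add_cancel]

namespace MeasureTheory

variable {Ω : Type*} [MeasurableSpace Ω] {μ : Measure Ω} {p : ℝ} {X Y : Ω → ℝ}

theorem MemLp.integrable_abs_rpow (hp : 0 < p) (hX : MemLp X (ENNReal.ofReal p) μ) :
    Integrable (fun ω => |X ω| ^ p) μ := by
  simpa [ENNReal.toReal_ofReal hp.le] using
    hX.integrable_norm_rpow (by simpa using hp) ENNReal.ofReal_ne_top

theorem MemLp.integral_abs_rpow_eq (hp : 0 < p) (hX : MemLp X (ENNReal.ofReal p) μ) :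
    ∫ ω, |X ω| ^ p ∂μ = (eLpNorm X (ENNReal.ofReal p) μ).toReal ^ p := by
  rw [hX.eLpNorm_eq_integral_rpow_norm (by simpa using hp) ENNReal.ofReal_ne_top,
    ENNReal.toReal_ofReal hp.le, ENNReal.toReal_ofReal (by positivity),
    Real.rpow_inv_rpow (integral_nonneg fun ω => by positivity) hp.ne']
  simp only [Real.norm_eq_abs]

theorem MemLp.abs_rpow_sub_one (hp : 1 < p) (hY : MemLp Y (ENNReal.ofReal p) μ) :
    MemLp (fun ω => |Y ω| ^ (p - 1)) (ENNReal.ofReal p.conjExponent) μ := by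
  have hp1 : 0 < p - 1 := by linarith
  simpa [ENNReal.toReal_ofReal hp1.le, Real.conjExponent, ENNReal.ofReal_div_of_pos hp1] using
    hY.norm_rpow_div (ENNReal.ofReal (p - 1))

theorem integrable_abs_mul_abs_rpow_sub_one (hp : 1 < p) (hX : MemLp X (ENNReal.ofReal p) μ)
    (hY : MemLp Y (ENNReal.ofReal p) μ) :
    Integrable (fun ω => |X ω| * |Y ω| ^ (p - 1)) μ :=
  haveI := (Real.HolderConjugate.conjExponent hp).ennrealOfReal
  hX.abs.integrable_mul (hY.abs_rpow_sub_one hp)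

theorem integral_abs_mul_abs_rpow_sub_one_le (hp : 1 < p) (hX : MemLp X (ENNReal.ofReal p) μ)
    (hY : MemLp Y (ENNReal.ofReal p) μ) :
    ∫ ω, |X ω| * |Y ω| ^ (p - 1) ∂μ
      ≤ (eLpNorm X (ENNReal.ofReal p) μ).toReal
          * (eLpNorm Y (ENNReal.ofReal p) μ).toReal ^ (p - 1) := by
  have hpq := Real.HolderConjugate.conjExponent hp
  have hholder := integral_mul_norm_le_Lp_mul_Lq hpq hX (hY.abs_rpow_sub_one hp)
  have hpow : ∀ ω, (|Y ω| ^ (p - 1)) ^ p.conjExponent = |Y ω| ^ p := fun ω => by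
    rw [← Real.rpow_mul (abs_nonneg _), hpq.sub_one_mul_conj]
  simp only [Real.norm_eq_abs, abs_of_nonneg (Real.rpow_nonneg (abs_nonneg _) _),
    hpow, hX.integral_abs_rpow_eq hpq.pos, hY.integral_abs_rpow_eq hpq.pos] at hholder
  refine hholder.trans_eq ?_
  rw [← Real.rpow_mul ENNReal.toReal_nonneg, ← Real.rpow_mul ENNReal.toReal_nonneg,
    mul_one_div_cancel hpq.ne_zero, Real.rpow_one, mul_one_div, hpq.div_conj_eq_sub_one]

end MeasureTheory

theorem abs_mul_sub_le_mul_abs_rpow {r : ℝ} {g : ℝ → ℝ}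
    (hg0 : ∀ x, |g x - g 0| ≤ |x| ^ (r - 1)) (a s : ℝ) :
    |a * (g s - g 0)| ≤ |a| * |s| ^ (r - 1) := by
  rw [abs_mul]
  exact mul_le_mul_of_nonneg_left (hg0 s) (abs_nonneg a)

section Centered

variable {Ω : Type*} [MeasurableSpace Ω] {μ : Measure Ω} {r : ℝ} {g : ℝ → ℝ}
  {S R : Ω → ℝ}

theorem integrable_mul_comp_sub_of_abs_sub_le (hr : 1 < r) (hg : Measurable g)
    (hg0 : ∀ x, |g x - g 0| ≤ |x| ^ (r - 1)) (hS : MemLp S (ENNReal.ofReal r) μ)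
    (hR : MemLp R (ENNReal.ofReal r) μ) :
    Integrable (fun ω => R ω * (g (S ω) - g 0)) μ :=
  (integrable_abs_mul_abs_rpow_sub_one hr hR hS).mono'
    (hR.1.mul ((hg.comp_aemeasurable hS.1.aemeasurable).sub
      aemeasurable_const).aestronglyMeasurable)
    (ae_of_all _ fun ω => abs_mul_sub_le_mul_abs_rpow hg0 (R ω) (S ω))

theorem integral_mul_comp_sub_le_of_abs_sub_le (hr : 1 < r) (hg : Measurable g)
    (hg0 : ∀ x, |g x - g 0| ≤ |x| ^ (r - 1)) (hS : MemLp S (ENNReal.ofReal r) μ)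
    (hR : MemLp R (ENNReal.ofReal r) μ) :
    ∫ ω, R ω * (g (S ω) - g 0) ∂μ
      ≤ (eLpNorm R (ENNReal.ofReal r) μ).toReal
          * (eLpNorm S (ENNReal.ofReal r) μ).toReal ^ (r - 1) :=
  (integral_mono (integrable_mul_comp_sub_of_abs_sub_le hr hg hg0 hS hR)
    (integrable_abs_mul_abs_rpow_sub_one hr hR hS) fun ω =>
      (le_abs_self _).trans (abs_mul_sub_le_mul_abs_rpow hg0 (R ω) (S ω))).trans
    (integral_abs_mul_abs_rpow_sub_one_le hr hR hS)

variable [IsFiniteMeasure μ]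

theorem integrable_mul_comp_of_abs_sub_le (hr : 1 < r) (hg : Measurable g)
    (hg0 : ∀ x, |g x - g 0| ≤ |x| ^ (r - 1)) (hS : MemLp S (ENNReal.ofReal r) μ)
    (hR : MemLp R (ENNReal.ofReal r) μ) :
    Integrable (fun ω => R ω * g (S ω)) μ := by
  refine (((hR.integrable (by simpa using hr.le)).mul_const (g 0)).add
    (integrable_mul_comp_sub_of_abs_sub_le hr hg hg0 hS hR)).congr (ae_of_all _ fun ω => ?_)
  simp only [Pi.add_apply]
  ring

theorem integral_mul_comp_le_of_integral_eq_zero (hr : 1 < r) (hg : Measurable g)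
    (hg0 : ∀ x, |g x - g 0| ≤ |x| ^ (r - 1)) (hS : MemLp S (ENNReal.ofReal r) μ)
    (hR : MemLp R (ENNReal.ofReal r) μ) (hR0 : ∫ ω, R ω ∂μ = 0) :
    ∫ ω, R ω * g (S ω) ∂μ
      ≤ (eLpNorm R (ENNReal.ofReal r) μ).toReal
          * (eLpNorm S (ENNReal.ofReal r) μ).toReal ^ (r - 1) := by
  have hcentered : ∫ ω, R ω * g (S ω) ∂μ = ∫ ω, R ω * (g (S ω) - g 0) ∂μ := by
    simp_rw [mul_sub]
    rw [integral_sub (integrable_mul_comp_of_abs_sub_le hr hg hg0 hS hR)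
      ((hR.integrable (by simpa using hr.le)).mul_const _), integral_mul_const, hR0, zero_mul,
      sub_zero]
  exact hcentered.trans_le (integral_mul_comp_sub_le_of_abs_sub_le hr hg hg0 hS hR)

end Centered

theorem zolotarev_r_one_two_perturbation_general
    {Ω : Type*} [MeasurableSpace Ω] (μ : Measure Ω) [IsProbabilityMeasure μ]
    (r : ℝ) (hr1 : 1 < r)
    (S R : Ω → ℝ)
    (hSr : MemLp S (ENNReal.ofReal r) μ) (hRr : MemLp R (ENNReal.ofReal r) μ)
    (hR0 : ∫ ω, R ω ∂μ = 0) :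
    ∀ f : ℝ → ℝ, Differentiable ℝ f →
      (∀ x y : ℝ, |deriv f x - deriv f y| ≤ |x - y| ^ (r - 1)) →
      ∫ ω, (f (S ω + R ω) - f (S ω)) ∂μ
        ≤ (eLpNorm R (ENNReal.ofReal r) μ).toReal
            * (eLpNorm S (ENNReal.ofReal r) μ).toReal ^ (r - 1)
          + (eLpNorm R (ENNReal.ofReal r) μ).toReal ^ r := by
  intro f hf hf'
  have hr : 0 < r := zero_lt_one.trans hr1
  have hf'0 : ∀ x, |deriv f x - deriv f 0| ≤ |x| ^ (r - 1) := fun x => by simpa using hf' x 0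
  have htaylor : ∀ ω, |f (S ω + R ω) - f (S ω) - R ω * deriv f (S ω)| ≤ |R ω| ^ r :=
    fun ω => abs_sub_sub_mul_deriv_le_rpow hr1.le hf hf' (S ω) (R ω)
  have hlin := integrable_mul_comp_of_abs_sub_le hr1 (measurable_deriv f) hf'0 hSr hRr
  have hRpow := hRr.integrable_abs_rpow hr
  have hrem : Integrable (fun ω => f (S ω + R ω) - f (S ω) - R ω * deriv f (S ω)) μ :=
    hRpow.mono' (((hf.continuous.comp_aestronglyMeasurable (hSr.1.add hRr.1)).sub
      (hf.continuous.comp_aestronglyMeasurable hSr.1)).sub hlin.1) (ae_of_all _ htaylor)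
  calc ∫ ω, (f (S ω + R ω) - f (S ω)) ∂μ
      = ∫ ω, R ω * deriv f (S ω) ∂μ
          + ∫ ω, (f (S ω + R ω) - f (S ω) - R ω * deriv f (S ω)) ∂μ := by
        rw [← integral_add hlin hrem]; simp only [add_sub_cancel]
    _ ≤ ∫ ω, R ω * deriv f (S ω) ∂μ + ∫ ω, |R ω| ^ r ∂μ :=
        add_le_add_right (integral_mono hrem hRpow fun ω => (le_abs_self _).trans (htaylor ω)) _
    _ ≤ _ := by
        rw [hRr.integral_abs_rpow_eq hr]
        gcongr
        exact integral_mul_comp_le_of_integral_eq_zero hr1 (measurable_deriv f) hf'0 hSr hRr hR0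

theorem zolotarev_r_one_two_perturbation
    {Ω : Type*} [MeasurableSpace Ω] (μ : Measure Ω) [IsProbabilityMeasure μ]
    (r : ℝ) (hr1 : 1 < r) (hr2 : r ≤ 2)
    (S R : Ω → ℝ) (hS : Measurable S) (hR : Measurable R)
    (hSr : MemLp S (ENNReal.ofReal r) μ) (hRr : MemLp R (ENNReal.ofReal r) μ)
    (hR0 : ∫ ω, R ω ∂μ = 0) :
    ∀ f : ℝ → ℝ, Differentiable ℝ f →
      (∀ x y : ℝ, |deriv f x - deriv f y| ≤ |x - y| ^ (r - 1)) →
      ∫ ω, (f (S ω + R ω) - f (S ω)) ∂μ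
        ≤ (eLpNorm R (ENNReal.ofReal r) μ).toReal
            * (eLpNorm S (ENNReal.ofReal r) μ).toReal ^ (r - 1)
          + (eLpNorm R (ENNReal.ofReal r) μ).toReal ^ r :=
  zolotarev_r_one_two_perturbation_general μ r hr1 S R hSr hRr hR0
end
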